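/- arXiv:1410.3996 — 4 statements merged into one kernel-verified Lean document; each statement's English description precedes it below -/
import Mathlib

section
/- Let M ∈ M_{m,(m+n)}(ℝ) and let W ≤ ℝ^{m+n} be a nonzero rational subspace (i.e. spanned by vectors in ℚ^{m+n}) with dim(M·W) = r ≥ 1. Then β(M) ≥ (dim W)/r − 1. -/
open scoped ENNReal

noncomputable def euclNorm {d : ℕ} (v : Fin d → ℝ) : ℝ :=
  ‖(WithLp.equiv 2 (Fin d → ℝ)).symm v‖

def approxSet (m n : ℕ) (M : Matrix (Fin m) (Fin (m + n)) ℝ) (b : ℝ) :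
    Set (Fin (m + n) → ℤ) :=
  {q | euclNorm (M.mulVec fun i => (q i : ℝ)) < euclNorm (fun i => ((q i : ℝ))) ^ (-b)}

noncomputable def dioExp (m n : ℕ) (M : Matrix (Fin m) (Fin (m + n)) ℝ) : ℝ≥0∞ :=
  sSup {x : ℝ≥0∞ | ∃ b : ℝ, 0 ≤ b ∧ x = ENNReal.ofReal b ∧ (approxSet m n M b).Infinite}

def IsRationalSubspace {d : ℕ} (W : Submodule ℝ (Fin d → ℝ)) : Prop :=
  ∃ s : Set (Fin d → ℚ), W = Submodule.span ℝ ((fun v : Fin d → ℚ => fun i => ((v i : ℝ))) '' s)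

def pencil (m n : ℕ) (W : Submodule ℝ (Fin (m + n) → ℝ)) (r : ℕ) :
    Set (Matrix (Fin m) (Fin (m + n)) ℝ) :=
  {M | Module.finrank ℝ (W.map M.mulVecLin) ≤ r}

open Filter Module Matrix

/-! Pick integer vectors `z₁, …, z_k` forming a basis of `W`, `k = dim W`. The map
`a ↦ M (∑ aᵢ zᵢ)` on `ℝᵏ` has rank `s ≤ r`, so Dirichlet's box principle applies: the `(N + 1)ᵏ`
points of `{0, …, N}ᵏ` have images in a box of side `O(N)` in `ℝˢ`, which is cut into
`O(N^{(1+e)s})` cubes of side `N^{-e}`. When `(1 + e) r < k` two points share a cube, and their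
difference gives `q ≠ 0` in `W ∩ ℤ^{m+n}` with `‖q‖ ≪ N` and `‖M q‖ ≪ N^{-e}`, hence
`‖M q‖ < ‖q‖^{-b}` for `b < e`. If some such lattice point lies in `ker M`, its multiples already
give infinitely many solutions; otherwise `0 < ‖M q‖ → 0` forces infinitely many distinct `q`. -/

theorem euclNorm_pos {d : ℕ} {v : Fin d → ℝ} (hv : v ≠ 0) : 0 < euclNorm v :=
  norm_pos_iff.2 fun h => hv (by simpa using h)

theorem one_le_euclNorm_intCast {d : ℕ} {q : Fin d → ℤ} (hq : q ≠ 0) :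
    1 ≤ euclNorm fun j => (q j : ℝ) := by
  obtain ⟨j, hj⟩ := Function.ne_iff.1 hq
  calc (1 : ℝ) ≤ |(q j : ℝ)| := by exact_mod_cast Int.one_le_abs hj
    _ ≤ euclNorm fun j => (q j : ℝ) :=
      PiLp.norm_apply_le ((WithLp.equiv 2 (Fin d → ℝ)).symm fun j => (q j : ℝ)) j

theorem Set.infinite_of_forall_exists_pos_lt {α : Type*} {s : Set α} (f : α → ℝ)
    (h : ∀ ε > 0, ∃ x ∈ s, 0 < f x ∧ f x < ε) : s.Infinite := by
  intro hs
  obtain ⟨x₀, hx₀, hpos₀, -⟩ := h 1 one_pos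
  obtain ⟨x, ⟨-, hx⟩, hmin⟩ := Set.exists_min_image (s ∩ {x | 0 < f x}) f
    (hs.subset Set.inter_subset_left) ⟨x₀, hx₀, hpos₀⟩
  obtain ⟨y, hy, hpos, hlt⟩ := h (f x) hx
  exact (hmin y ⟨hy, hpos⟩).not_gt hlt

theorem floor_div_mem_Icc_of_abs_le {x δ : ℝ} {K : ℤ} (hδ : 0 < δ) (hx : |x| ≤ K * δ) :
    ⌊x / δ⌋ ∈ Finset.Icc (-K) K := by
  rw [← div_le_iff₀ hδ, ← abs_of_pos hδ, ← abs_div, abs_le] at hx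
  exact Finset.mem_Icc.2 ⟨Int.le_floor.2 (by exact_mod_cast hx.1),
    (Int.floor_le_floor hx.2).trans_eq (Int.floor_intCast K)⟩

section Dirichlet

variable {ι κ : Type*} [Fintype ι] [Fintype κ]

theorem exists_int_ne_zero_norm_le_norm_apply_lt (P : (ι → ℝ) →L[ℝ] (κ → ℝ)) (N : ℕ) {δ : ℝ}
    (hδ : 0 < δ) (hcard : (2 * ⌈N * ‖P‖ / δ⌉₊ + 1) ^ Fintype.card κ < (N + 1) ^ Fintype.card ι) :
    ∃ a : ι → ℤ, a ≠ 0 ∧ ‖fun i => (a i : ℝ)‖ ≤ N ∧ ‖P fun i => (a i : ℝ)‖ < δ := by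
  classical
  set K : ℤ := ((⌈N * ‖P‖ / δ⌉₊ : ℕ) : ℤ)
  let box : Finset (ι → ℕ) := Fintype.piFinset fun _ => Finset.range (N + 1)
  let cells : Finset (κ → ℤ) := Fintype.piFinset fun _ => Finset.Icc (-K) K
  let cell : (ι → ℕ) → κ → ℤ := fun a j => ⌊P (fun i => (a i : ℝ)) j / δ⌋
  have coord_le : ∀ a ∈ box, ∀ i, (a i : ℝ) ≤ N := fun a ha i =>
    Nat.cast_le.2 (Finset.mem_range_succ_iff.1 (Fintype.mem_piFinset.1 ha i))
  have norm_le_of_mem_box : ∀ a ∈ box, ‖fun i => (a i : ℝ)‖ ≤ N := fun a ha =>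
    (pi_norm_le_iff_of_nonneg N.cast_nonneg).2 fun i => by
      simpa using coord_le a ha i
  have hmaps : Set.MapsTo cell box cells := fun a ha => Fintype.mem_piFinset.2 fun j =>
    floor_div_mem_Icc_of_abs_le hδ <| calc
      |P (fun i => (a i : ℝ)) j| ≤ ‖P (fun i => (a i : ℝ))‖ :=
        (Real.norm_eq_abs _).symm.trans_le (norm_le_pi_norm _ j)
      _ ≤ ‖P‖ * N := P.le_opNorm_of_le (norm_le_of_mem_box a ha)
      _ ≤ K * δ := by
        rw [← div_le_iff₀ hδ, mul_comm]
        exact_mod_cast Nat.le_ceil _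
  have hcard' : cells.card < box.card := by
    have hK : (K + 1 - -K).toNat = 2 * ⌈N * ‖P‖ / δ⌉₊ + 1 := by omega
    simp only [cells, box, Fintype.card_piFinset, Int.card_Icc, hK, Finset.card_range,
      Finset.prod_const, Finset.card_univ]
    exact hcard
  obtain ⟨a, ha, a', ha', hne, hcell⟩ := Finset.exists_ne_map_eq_of_card_lt_of_maps_to hcard' hmaps
  have hcast : (fun i => (((a i : ℤ) - a' i : ℤ) : ℝ)) =
      (fun i => (a i : ℝ)) - fun i => (a' i : ℝ) := by
    ext i; simp
  refine ⟨fun i => a i - a' i, ?_, ?_, ?_⟩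
  · intro h
    exact hne (funext fun i => by simpa [sub_eq_zero] using congrFun h i)
  · rw [hcast]
    refine (pi_norm_le_iff_of_nonneg N.cast_nonneg).2 fun i => ?_
    exact abs_sub_le_of_nonneg_of_le (a i).cast_nonneg (coord_le a ha i)
      (a' i).cast_nonneg (coord_le a' ha' i)
  · rw [hcast, map_sub, pi_norm_lt_iff hδ]
    intro j
    have := Int.abs_sub_lt_one_of_floor_eq_floor (congrFun hcell j)
    rwa [← sub_div, abs_div, abs_of_pos hδ, div_lt_one hδ, ← Real.norm_eq_abs] at this

theorem eventually_two_mul_ceil_add_one_pow_lt {c e : ℝ} (hc : 0 ≤ c) (he : 0 ≤ e) {r k : ℕ}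
    (hrk : (1 + e) * r < k) :
    ∀ᶠ N : ℕ in atTop, (2 * ⌈c * (N : ℝ) ^ (1 + e)⌉₊ + 1) ^ r < (N + 1) ^ k := by
  have hγ : 0 < k - (1 + e) * r := sub_pos.2 hrk
  have hk : k ≠ 0 := by rintro rfl; norm_num at hrk; nlinarith
  filter_upwards [eventually_ge_atTop 1, ((tendsto_rpow_atTop hγ).comp
    tendsto_natCast_atTop_atTop).eventually_gt_atTop ((2 * c + 3) ^ r)] with N hN hNγ
  have hN : (1 : ℝ) ≤ N := by exact_mod_cast hN
  have hN0 : (0 : ℝ) < N := by linarith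
  have hpow : 1 ≤ (N : ℝ) ^ (1 + e) := Real.one_le_rpow hN (by linarith)
  have hcells : 2 * (⌈c * (N : ℝ) ^ (1 + e)⌉₊ : ℝ) + 1 ≤ (2 * c + 3) * (N : ℝ) ^ (1 + e) := by
    nlinarith [Nat.ceil_lt_add_one (mul_nonneg hc (zero_le_one.trans hpow))]
  rw [← Nat.cast_lt (α := ℝ)]
  push_cast
  calc (2 * (⌈c * (N : ℝ) ^ (1 + e)⌉₊ : ℝ) + 1) ^ r
      ≤ ((2 * c + 3) * (N : ℝ) ^ (1 + e)) ^ r := pow_le_pow_left₀ (by positivity) hcells r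
    _ = (2 * c + 3) ^ r * (N : ℝ) ^ ((1 + e) * r) := by
      rw [mul_pow, ← Real.rpow_natCast ((N : ℝ) ^ (1 + e)) r, ← Real.rpow_mul hN0.le]
    _ < (N : ℝ) ^ (k - (1 + e) * r) * (N : ℝ) ^ ((1 + e) * r) :=
      mul_lt_mul_of_pos_right hNγ (by positivity)
    _ = (N : ℝ) ^ k := by rw [← Real.rpow_add hN0, sub_add_cancel, Real.rpow_natCast]
    _ < (N + 1) ^ k := pow_lt_pow_left₀ (by linarith) hN0.le hk

theorem eventually_exists_int_ne_zero_norm_apply_lt {F : Type*} [NormedAddCommGroup F]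
    [NormedSpace ℝ F] (T : (ι → ℝ) →ₗ[ℝ] F) {e : ℝ} (he : 0 ≤ e)
    (hrank : (1 + e) * finrank ℝ (LinearMap.range T) < Fintype.card ι) {η : ℝ} (hη : 0 < η) :
    ∀ᶠ N : ℕ in atTop, ∃ a : ι → ℤ, a ≠ 0 ∧ ‖fun i => (a i : ℝ)‖ ≤ N ∧
      ‖T fun i => (a i : ℝ)‖ < η * (N : ℝ) ^ (-e) := by
  set s := finrank ℝ (LinearMap.range T)
  let φ : LinearMap.range T ≃ₗ[ℝ] (Fin s → ℝ) := LinearEquiv.ofFinrankEq _ _ (by simp [s])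
  let P : (ι → ℝ) →L[ℝ] (Fin s → ℝ) :=
    LinearMap.toContinuousLinearMap (φ.toLinearMap ∘ₗ T.rangeRestrict)
  let B : (Fin s → ℝ) →L[ℝ] F :=
    LinearMap.toContinuousLinearMap ((LinearMap.range T).subtype ∘ₗ φ.symm.toLinearMap)
  have hBP : ∀ x, T x = B (P x) := by simp [B, P]
  set η' := η / (‖B‖ + 1)
  have hη' : 0 < η' := by positivity
  filter_upwards [eventually_ge_atTop 1, eventually_two_mul_ceil_add_one_pow_lt
    (div_nonneg (norm_nonneg P) hη'.le) he hrank] with N hN hcard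
  have hN0 : (0 : ℝ) < N := by exact_mod_cast hN
  have hδ : 0 < η' * (N : ℝ) ^ (-e) := by positivity
  have hratio : N * ‖P‖ / (η' * (N : ℝ) ^ (-e)) = ‖P‖ / η' * (N : ℝ) ^ (1 + e) := by
    rw [Real.rpow_neg hN0.le, Real.rpow_add hN0, Real.rpow_one]
    field_simp
  obtain ⟨a, ha0, haN, hPa⟩ := exists_int_ne_zero_norm_le_norm_apply_lt P N hδ
    (by rwa [hratio, Fintype.card_fin])
  refine ⟨a, ha0, haN, ?_⟩
  calc ‖T fun i => (a i : ℝ)‖ = ‖B (P fun i => (a i : ℝ))‖ := by rw [hBP]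
    _ ≤ ‖B‖ * ‖P fun i => (a i : ℝ)‖ := B.le_opNorm _
    _ ≤ ‖B‖ * (η' * (N : ℝ) ^ (-e)) := by gcongr
    _ < (‖B‖ + 1) * (η' * (N : ℝ) ^ (-e)) := by linarith
    _ = η * (N : ℝ) ^ (-e) := by rw [← mul_assoc, mul_div_cancel₀ _ (by positivity)]

end Dirichlet

namespace IsRationalSubspace

variable {d : ℕ} {W : Submodule ℝ (Fin d → ℝ)}

theorem span_inter_range_intCast (hW : IsRationalSubspace W) :
    Submodule.span ℝ ((W : Set (Fin d → ℝ)) ∩ Set.range fun z : Fin d → ℤ => fun j => (z j : ℝ))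
      = W := by
  refine le_antisymm (Submodule.span_le.2 fun v hv => hv.1) ?_
  obtain ⟨s, rfl⟩ := hW
  refine Submodule.span_le.2 ?_
  rintro _ ⟨v, hv, rfl⟩
  obtain ⟨b, hb⟩ := IsLocalization.exist_integer_multiples (nonZeroDivisors ℤ) Finset.univ v
  choose z hz using fun j => hb j (Finset.mem_univ j)
  have hb0 : ((b : ℤ) : ℝ) ≠ 0 := by exact_mod_cast nonZeroDivisors.coe_ne_zero b
  have hzv : (fun j => (z j : ℝ)) = ((b : ℤ) : ℝ) • fun j => (v j : ℝ) := by
    ext j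
    have := congrArg (fun x : ℚ => (x : ℝ)) (hz j)
    simpa using this
  have hzW : (fun j => (z j : ℝ)) ∈
      Submodule.span ℝ ((fun v : Fin d → ℚ => fun i => ((v i : ℝ))) '' s) := by
    rw [hzv]
    exact Submodule.smul_mem _ _ (Submodule.subset_span ⟨v, hv, rfl⟩)
  have : (fun j => (v j : ℝ)) = ((b : ℤ) : ℝ)⁻¹ • fun j => (z j : ℝ) := by
    rw [hzv, inv_smul_smul₀ hb0]
  rw [SetLike.mem_coe, show (fun v : Fin d → ℚ => fun i => (v i : ℝ)) v = _ from this]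
  exact Submodule.smul_mem _ _ (Submodule.subset_span ⟨hzW, z, rfl⟩)

theorem exists_int_linearIndependent (hW : IsRationalSubspace W) :
    ∃ z : Fin (finrank ℝ W) → Fin d → ℤ, LinearIndependent ℝ (fun i j => (z i j : ℝ)) ∧
      ∀ i, (fun j => (z i j : ℝ)) ∈ W := by
  obtain ⟨t, hts, hspan, hind⟩ := exists_linearIndependent ℝ
    ((W : Set (Fin d → ℝ)) ∩ Set.range fun z : Fin d → ℤ => fun j => (z j : ℝ))
  rw [hW.span_inter_range_intCast] at hspan
  have := hind.setFinite.fintype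
  have hcard : Fintype.card t = finrank ℝ W := by
    rw [← finrank_span_eq_card hind, Subtype.range_coe, hspan]
  let e := (Fintype.equivFinOfCardEq hcard).symm
  choose z hz using fun x : t => (hts x.2).2
  beta_reduce at hz
  refine ⟨fun i => z (e i), ?_, fun i => ?_⟩
  · rw [show (fun i j => (z (e i) j : ℝ)) = Subtype.val ∘ e from funext fun i => hz (e i)]
    exact hind.comp e e.injective
  · rw [hz]
    exact (hts (e i).2).1

theorem exists_int_euclNorm_mulVec_lt {m : ℕ} (M : Matrix (Fin m) (Fin d) ℝ)
    (hW : IsRationalSubspace W) {e : ℝ} (he : 0 ≤ e)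
    (hrank : (1 + e) * finrank ℝ (W.map M.mulVecLin) < finrank ℝ W) :
    ∃ C > 0, ∀ᶠ N : ℕ in atTop, ∃ q : Fin d → ℤ, q ≠ 0 ∧ (fun j => (q j : ℝ)) ∈ W ∧
      euclNorm (fun j => (q j : ℝ)) ≤ C * N ∧
      euclNorm (M *ᵥ fun j => (q j : ℝ)) < (C * N) ^ (-e) := by
  obtain ⟨z, hz, hzW⟩ := hW.exists_int_linearIndependent
  let Z := Fintype.linearCombination ℝ fun i j => (z i j : ℝ)
  have hZW : LinearMap.range Z ≤ W := by
    rw [Fintype.range_linearCombination, Submodule.span_le]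
    rintro _ ⟨i, rfl⟩
    exact hzW i
  let T := (WithLp.linearEquiv 2 ℝ (Fin m → ℝ)).symm.toLinearMap ∘ₗ M.mulVecLin ∘ₗ Z
  have hT : finrank ℝ (LinearMap.range T) ≤ finrank ℝ (W.map M.mulVecLin) := by
    rw [LinearMap.range_comp, LinearMap.range_comp, LinearEquiv.finrank_map_eq]
    exact Submodule.finrank_mono (Submodule.map_mono hZW)
  let Z' := LinearMap.toContinuousLinearMap
    ((WithLp.linearEquiv 2 ℝ (Fin d → ℝ)).symm.toLinearMap ∘ₗ Z)
  set C := ‖Z'‖ + 1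
  have hC : 0 < C := by positivity
  refine ⟨C, hC, ?_⟩
  have hrankT : (1 + e) * finrank ℝ (LinearMap.range T) < Fintype.card (Fin (finrank ℝ W)) := by
    rw [Fintype.card_fin]
    exact (mul_le_mul_of_nonneg_left (by exact_mod_cast hT) (by linarith)).trans_lt hrank
  filter_upwards [eventually_exists_int_ne_zero_norm_apply_lt T he hrankT
    (Real.rpow_pos_of_pos hC (-e))] with N ⟨a, ha0, haN, hTa⟩
  let q : Fin d → ℤ := ∑ i, a i • z i
  have hq : (fun j => (q j : ℝ)) = Z fun i => (a i : ℝ) := by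
    ext j
    simp [q, Z, Fintype.linearCombination_apply, Finset.sum_apply]
  refine ⟨q, fun h0 => ha0 ?_, ?_, ?_, ?_⟩
  · have hZa : Z (fun i => (a i : ℝ)) = 0 := by rw [← hq, h0]; ext; simp
    ext i
    exact_mod_cast Fintype.linearIndependent_iff.1 hz _ hZa i
  · exact hq ▸ hZW (LinearMap.mem_range_self Z _)
  · calc euclNorm (fun j => (q j : ℝ)) = ‖Z' fun i => (a i : ℝ)‖ := by rw [hq]; rfl
      _ ≤ ‖Z'‖ * N := Z'.le_opNorm_of_le haN
      _ ≤ C * N := by gcongr; linarith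
  · calc euclNorm (M *ᵥ fun j => (q j : ℝ)) = ‖T fun i => (a i : ℝ)‖ := by rw [hq]; rfl
      _ < C ^ (-e) * (N : ℝ) ^ (-e) := hTa
      _ = (C * N) ^ (-e) := (Real.mul_rpow hC.le N.cast_nonneg).symm

end IsRationalSubspace

theorem approxSet_infinite_of_mulVec_eq_zero {m n : ℕ} (M : Matrix (Fin m) (Fin (m + n)) ℝ)
    {q : Fin (m + n) → ℤ} (hq : q ≠ 0) (hMq : M *ᵥ (fun j => (q j : ℝ)) = 0) (b : ℝ) :
    (approxSet m n M b).Infinite := by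
  refine Set.infinite_of_injective_forall_mem (f := fun k : ℕ => (k + 1 : ℤ) • q) ?_ fun k => ?_
  · intro k k' h
    have := smul_left_injective ℤ hq h
    omega
  · have hkq : (k + 1 : ℤ) • q ≠ 0 := smul_ne_zero (by omega) hq
    have hM : M *ᵥ (fun j => (((k + 1 : ℤ) • q) j : ℝ)) = 0 := by
      have : (fun j => (((k + 1 : ℤ) • q) j : ℝ)) = ((k + 1 : ℤ) : ℝ) • fun j => (q j : ℝ) := by
        ext j; simp
      rw [this, Matrix.mulVec_smul, hMq, smul_zero]
    show euclNorm _ < _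
    rw [hM]
    exact (norm_zero).trans_lt (Real.rpow_pos_of_pos (zero_lt_one.trans_le
      (one_le_euclNorm_intCast hkq)) _)

theorem approxSet_infinite_of_isRationalSubspace {m n : ℕ} (M : Matrix (Fin m) (Fin (m + n)) ℝ)
    {W : Submodule ℝ (Fin (m + n) → ℝ)} (hW : IsRationalSubspace W)
    (hker : ∀ q : Fin (m + n) → ℤ, q ≠ 0 → (fun j => (q j : ℝ)) ∈ W →
      M *ᵥ (fun j => (q j : ℝ)) ≠ 0)
    {b e : ℝ} (hb : 0 ≤ b) (hbe : b < e)
    (hrank : (1 + e) * finrank ℝ (W.map M.mulVecLin) < finrank ℝ W) :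
    (approxSet m n M b).Infinite := by
  obtain ⟨C, hC, happrox⟩ := hW.exists_int_euclNorm_mulVec_lt M (hb.trans hbe.le) hrank
  refine Set.infinite_of_forall_exists_pos_lt (fun q => euclNorm (M *ᵥ fun j => (q j : ℝ)))
    fun ε hε => ?_
  have hsmall : ∀ᶠ N : ℕ in atTop, (C * N) ^ (-e) < ε :=
    ((tendsto_rpow_neg_atTop (hb.trans_lt hbe)).comp
      (tendsto_natCast_atTop_atTop.const_mul_atTop hC)).eventually_lt_const hε
  obtain ⟨N, ⟨q, hq0, hqW, hqN, hMq⟩, hNε⟩ := (happrox.and hsmall).exists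
  have hq1 := one_le_euclNorm_intCast hq0
  refine ⟨q, ?_, euclNorm_pos (hker q hq0 hqW), hMq.trans hNε⟩
  calc euclNorm (M *ᵥ fun j => (q j : ℝ)) < (C * N) ^ (-e) := hMq
    _ ≤ euclNorm (fun j => (q j : ℝ)) ^ (-e) :=
      Real.rpow_le_rpow_of_nonpos (zero_lt_one.trans_le hq1) hqN (by linarith)
    _ ≤ euclNorm (fun j => (q j : ℝ)) ^ (-b) :=
      Real.rpow_le_rpow_of_exponent_le hq1 (by linarith)

theorem ofReal_le_dioExp {m n : ℕ} (M : Matrix (Fin m) (Fin (m + n)) ℝ) {c : ℝ}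
    (h : ∀ b, 0 ≤ b → b < c → (approxSet m n M b).Infinite) :
    ENNReal.ofReal c ≤ dioExp m n M := by
  refine le_of_forall_lt_imp_le_of_dense fun x hx => ?_
  rw [← ENNReal.ofReal_toReal (ne_top_of_lt hx)]
  exact le_sSup ⟨x.toReal, ENNReal.toReal_nonneg, rfl,
    h _ ENNReal.toReal_nonneg (ENNReal.toReal_lt_of_lt_ofReal hx)⟩

theorem stmt1_general (m n : ℕ) (M : Matrix (Fin m) (Fin (m + n)) ℝ)
    (W : Submodule ℝ (Fin (m + n) → ℝ)) (hW : IsRationalSubspace W)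
    (r : ℕ) (hrank : Module.finrank ℝ (W.map M.mulVecLin) = r) :
    ENNReal.ofReal ((Module.finrank ℝ W : ℝ) / r - 1) ≤ dioExp m n M := by
  refine ofReal_le_dioExp M fun b hb hbc => ?_
  by_cases hker : ∃ q : Fin (m + n) → ℤ, q ≠ 0 ∧ (fun j => (q j : ℝ)) ∈ W ∧
      M *ᵥ (fun j => (q j : ℝ)) = 0
  · obtain ⟨q, hq, -, hMq⟩ := hker
    exact approxSet_infinite_of_mulVec_eq_zero M hq hMq b
  · push Not at hker
    obtain ⟨e, hbe, hec⟩ := exists_between hbc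
    -- for `r = 0` the bound reads `k / 0 - 1 = -1`, so no admissible `b` exists
    have hr : (0 : ℝ) < r := by
      rcases r.eq_zero_or_pos with rfl | hr
      · norm_num at hec; linarith
      · exact_mod_cast hr
    refine approxSet_infinite_of_isRationalSubspace M hW hker hb hbe ?_
    rwa [hrank, ← lt_div_iff₀ hr, ← lt_sub_iff_add_lt']

theorem stmt1 (m n : ℕ) (M : Matrix (Fin m) (Fin (m + n)) ℝ)
    (W : Submodule ℝ (Fin (m + n) → ℝ)) (hW : IsRationalSubspace W) (hW0 : W ≠ ⊥)
    (r : ℕ) (hr : 1 ≤ r) (hrank : Module.finrank ℝ (W.map M.mulVecLin) = r) :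
    ENNReal.ofReal ((Module.finrank ℝ W : ℝ) / r - 1) ≤ dioExp m n M :=
  stmt1_general m n M W hW r hrank
end

section
/- The diophantine exponent of a matrix depends only on its kernel: if M, M' ∈ M_{m,(m+n)}(ℝ) are surjective and ker M = ker M', then β(M) = β(M'). -/
open scoped ENNReal

lemma abs_le_euclNorm {d : ℕ} (v : Fin d → ℝ) (i : Fin d) : |v i| ≤ euclNorm v := by
  have h := EuclideanSpace.norm_eq ((WithLp.equiv 2 (Fin d → ℝ)).symm v)
  rw [euclNorm, h]
  have : |v i| = Real.sqrt (‖v i‖ ^ 2) := by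
    rw [Real.norm_eq_abs, Real.sqrt_sq_eq_abs, abs_abs]
  rw [this]
  apply Real.sqrt_le_sqrt
  refine Finset.single_le_sum (f := fun j => ‖v j‖ ^ 2) (fun j _ => by positivity)
    (Finset.mem_univ i)

lemma finite_small {d : ℕ} (R : ℝ) :
    {q : Fin d → ℤ | euclNorm (fun i => (q i : ℝ)) ≤ R}.Finite := by
  apply Set.Finite.subset (Set.Finite.pi (fun i : Fin d => Set.finite_Icc (-⌈R⌉) ⌈R⌉))
  intro q hq
  intro i _
  have h1 : |(q i : ℝ)| ≤ R := le_trans (abs_le_euclNorm (fun j => ((q j : ℝ))) i) hq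
  have h2 : (|q i| : ℝ) ≤ (⌈R⌉ : ℝ) := by
    exact le_trans h1 (Int.le_ceil R)
  have : |q i| ≤ ⌈R⌉ := by exact_mod_cast h2
  simp [Set.mem_Icc, abs_le] at this ⊢
  exact this

lemma factor {m d : ℕ} (M M' : Matrix (Fin m) (Fin d) ℝ)
    (hM : Function.Surjective M.mulVecLin)
    (h : LinearMap.ker M.mulVecLin ≤ LinearMap.ker M'.mulVecLin) :
    ∃ A : (Fin m → ℝ) →ₗ[ℝ] (Fin m → ℝ), ∀ v, A (M.mulVec v) = M'.mulVec v := by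
  set e := LinearMap.quotKerEquivOfSurjective M.mulVecLin hM with he
  refine ⟨(Submodule.liftQ (LinearMap.ker M.mulVecLin) M'.mulVecLin h) ∘ₗ
    (e.symm : (Fin m → ℝ) →ₗ[ℝ] _), fun v => ?_⟩
  have h1 : e.symm (M.mulVec v) = Submodule.Quotient.mk v := by
    apply e.injective
    rw [LinearEquiv.apply_symm_apply]
    simp [he, LinearMap.quotKerEquivOfSurjective, LinearMap.quotKerEquivRange]
  simp only [LinearMap.coe_comp, Function.comp_apply, LinearEquiv.coe_coe]
  rw [h1]
  simp

lemma bound_lemma {m : ℕ} (A : (Fin m → ℝ) →ₗ[ℝ] (Fin m → ℝ)) :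
    ∃ C : ℝ, 0 < C ∧ ∀ w, euclNorm (A w) ≤ C * euclNorm w := by
  set eq2 := WithLp.linearEquiv 2 ℝ (Fin m → ℝ)
  set B : EuclideanSpace ℝ (Fin m) →ₗ[ℝ] EuclideanSpace ℝ (Fin m) :=
    eq2.symm.toLinearMap ∘ₗ A ∘ₗ eq2.toLinearMap with hB
  set Bc := LinearMap.toContinuousLinearMap B with hBc
  refine ⟨‖Bc‖ + 1, by positivity, fun w => ?_⟩
  have h1 : euclNorm (A w) = ‖Bc ((WithLp.equiv 2 (Fin m → ℝ)).symm w)‖ := by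
    simp [euclNorm, hBc, hB, eq2]
  rw [h1]
  calc ‖Bc ((WithLp.equiv 2 (Fin m → ℝ)).symm w)‖
      ≤ ‖Bc‖ * ‖(WithLp.equiv 2 (Fin m → ℝ)).symm w‖ := Bc.le_opNorm _
    _ ≤ (‖Bc‖ + 1) * euclNorm w := by
        apply mul_le_mul_of_nonneg_right (by linarith) (norm_nonneg _)

lemma key_le (m n : ℕ) (M M' : Matrix (Fin m) (Fin (m + n)) ℝ)
    (hM : Function.Surjective M.mulVecLin)
    (h : LinearMap.ker M.mulVecLin ≤ LinearMap.ker M'.mulVecLin) :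
    dioExp m n M ≤ dioExp m n M' := by
  obtain ⟨A, hA⟩ := factor M M' hM h
  obtain ⟨C, hC, hCb⟩ := bound_lemma A
  -- main step: if approxSet m n M b is infinite and 0 ≤ b' < b,
  -- then approxSet m n M' b' is infinite
  have main : ∀ b b' : ℝ, 0 ≤ b' → b' < b → (approxSet m n M b).Infinite →
      (approxSet m n M' b').Infinite := by
    intro b b' hb'0 hb'b hinf
    set T : ℝ := max (C ^ ((b - b')⁻¹)) 1 with hT
    have hsub : approxSet m n M b \ {q | euclNorm (fun i => (q i : ℝ)) ≤ T}
        ⊆ approxSet m n M' b' := by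
      rintro q ⟨hq1, hq2⟩
      simp only [Set.mem_setOf_eq, not_le] at hq2
      set N : ℝ := euclNorm (fun i => ((q i : ℝ))) with hN
      have hN1 : 1 < N := lt_of_le_of_lt (le_max_right _ _) hq2
      have hN0 : (0 : ℝ) < N := lt_trans one_pos hN1
      have hCN : C ≤ N ^ (b - b') := by
        have h1 : C ^ ((b - b')⁻¹) ≤ N := le_of_lt (lt_of_le_of_lt (le_max_left _ _) hq2)
        have h2 : (C ^ ((b - b')⁻¹)) ^ (b - b') ≤ N ^ (b - b') :=
          Real.rpow_le_rpow (Real.rpow_nonneg hC.le _) h1 (by linarith)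
        rwa [← Real.rpow_mul hC.le, inv_mul_cancel₀ (by linarith), Real.rpow_one] at h2
      have hq1' : euclNorm (M.mulVec fun i => (q i : ℝ)) < N ^ (-b) := hq1
      show euclNorm (M'.mulVec fun i => (q i : ℝ)) < N ^ (-b')
      have hstep : euclNorm (M'.mulVec fun i => (q i : ℝ))
          ≤ C * euclNorm (M.mulVec fun i => (q i : ℝ)) := by
        rw [← hA]
        exact hCb _
      calc euclNorm (M'.mulVec fun i => (q i : ℝ))
          ≤ C * euclNorm (M.mulVec fun i => (q i : ℝ)) := hstep
        _ < C * N ^ (-b) := by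
            apply mul_lt_mul_of_pos_left hq1' hC
        _ ≤ N ^ (b - b') * N ^ (-b) := by
            apply mul_le_mul_of_nonneg_right hCN (Real.rpow_nonneg hN0.le _)
        _ = N ^ (-b') := by
            rw [← Real.rpow_add hN0]
            ring_nf
    exact Set.Infinite.mono hsub (hinf.diff (finite_small T))
  apply sSup_le
  rintro x ⟨b, hb0, rfl, hinf⟩
  rcases eq_or_lt_of_le hb0 with hb | hb
  · simp [← hb]
  by_contra hlt
  push_neg at hlt
  set x := dioExp m n M' with hx
  have hxtop : x ≠ ⊤ := (hlt.trans_le le_top).ne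
  have hxb : x.toReal < b := by
    have := ENNReal.toReal_lt_toReal hxtop (ENNReal.ofReal_ne_top) |>.mpr hlt
    rwa [ENNReal.toReal_ofReal hb0] at this
  set b' : ℝ := (max x.toReal 0 + b) / 2 with hb'
  have hmax : max x.toReal 0 < b := max_lt hxb hb
  have hb'0 : 0 ≤ b' := by
    have : (0:ℝ) ≤ max x.toReal 0 := le_max_right _ _
    rw [hb']; linarith
  have hb'b : b' < b := by rw [hb']; linarith
  have hxb' : x.toReal < b' := by
    have : x.toReal ≤ max x.toReal 0 := le_max_left _ _
    rw [hb']; linarith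
  have hmem : ENNReal.ofReal b' ≤ x :=
    le_sSup ⟨b', hb'0, rfl, main b b' hb'0 hb'b hinf⟩
  have hlt2 : x < ENNReal.ofReal b' := by
    rwa [ENNReal.lt_ofReal_iff_toReal_lt hxtop]
  exact absurd hmem (not_le.mpr hlt2)

theorem stmt3 (m n : ℕ) (M M' : Matrix (Fin m) (Fin (m + n)) ℝ)
    (hM : Function.Surjective M.mulVecLin) (hM' : Function.Surjective M'.mulVecLin)
    (hker : LinearMap.ker M.mulVecLin = LinearMap.ker M'.mulVecLin) :
    dioExp m n M = dioExp m n M' :=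
  le_antisymm (key_le m n M M' hM hker.le) (key_le m n M' M hM' hker.ge)
end

section
/- Submodularity lemma: let V be a finite-dimensional vector space over a field, G a group acting on V by linear automorphisms, and φ a G-invariant, non-decreasing, submodular function from subspaces of V to ℕ (φ(W₁+W₂)+φ(W₁∩W₂) ≤ φ(W₁)+φ(W₂)). Then there exists a G-invariant nonzero subspace W₀ such that φ(W₀)/dim W₀ = min over all nonzero subspaces W of φ(W)/dim W. -/
theorem stmt6 {K V G : Type*} [Field K] [AddCommGroup V] [Module K V]
    [FiniteDimensional K V] [Group G] (ρ : G →* (V ≃ₗ[K] V))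
    (φ : Submodule K V → ℕ)
    (hmono : ∀ W₁ W₂ : Submodule K V, W₁ ≤ W₂ → φ W₁ ≤ φ W₂)
    (hsub : ∀ W₁ W₂ : Submodule K V, φ (W₁ ⊔ W₂) + φ (W₁ ⊓ W₂) ≤ φ W₁ + φ W₂)
    (hinv : ∀ (g : G) (W : Submodule K V), φ (W.map (ρ g : V ≃ₗ[K] V).toLinearMap) = φ W)
    [Nontrivial V] :
    ∃ W₀ : Submodule K V, W₀ ≠ ⊥ ∧
      (∀ g : G, W₀.map (ρ g : V ≃ₗ[K] V).toLinearMap = W₀) ∧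
      ∀ W : Submodule K V, W ≠ ⊥ →
        (φ W₀ : ℝ) / Module.finrank K W₀ ≤ (φ W : ℝ) / Module.finrank K W := by
  classical
  set n := Module.finrank K V with hn
  set d : Submodule K V → ℕ := fun W => Module.finrank K W with hd
  have hdpos : ∀ W : Submodule K V, W ≠ ⊥ → 0 < d W := by
    intro W hW
    rcases Nat.eq_zero_or_pos (d W) with h | h
    · exact absurd (Submodule.finrank_eq_zero.mp h) hW
    · exact h
  have hdle : ∀ W : Submodule K V, d W ≤ n := fun W => Submodule.finrank_le W
  have hdvd : ∀ W : Submodule K V, W ≠ ⊥ → d W ∣ n.factorial := fun W hW =>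
    Nat.dvd_factorial (hdpos W hW) (hdle W)
  set m : Submodule K V → ℕ := fun W => φ W * (n.factorial / d W) with hm
  have hmd : ∀ W : Submodule K V, W ≠ ⊥ → m W * d W = φ W * n.factorial := by
    intro W hW
    simp only [hm, mul_assoc, Nat.div_mul_cancel (hdvd W hW)]
  have key : ∀ W W' : Submodule K V, W ≠ ⊥ → W' ≠ ⊥ →
      (m W ≤ m W' ↔ φ W * d W' ≤ φ W' * d W) := by
    intro W W' hW hW'
    have h1 : 0 < d W * d W' := Nat.mul_pos (hdpos W hW) (hdpos W' hW')
    have hf : 0 < n.factorial := Nat.factorial_pos n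
    constructor
    · intro h
      have := Nat.mul_le_mul_right (d W * d W') h
      have e1 : m W * (d W * d W') = φ W * d W' * n.factorial := by
        rw [← mul_assoc, hmd W hW]; ring
      have e2 : m W' * (d W * d W') = φ W' * d W * n.factorial := by
        rw [show d W * d W' = d W' * d W from mul_comm _ _, ← mul_assoc, hmd W' hW']; ring
      rw [e1, e2] at this
      exact Nat.le_of_mul_le_mul_right this hf
    · intro h
      have := Nat.mul_le_mul_right n.factorial h
      have e1 : φ W * d W' * n.factorial = m W * (d W * d W') := by
        rw [← mul_assoc, hmd W hW]; ring
      have e2 : φ W' * d W * n.factorial = m W' * (d W * d W') := by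
        rw [show d W * d W' = d W' * d W from mul_comm _ _, ← mul_assoc, hmd W' hW']; ring
      rw [e1, e2] at this
      exact Nat.le_of_mul_le_mul_right this h1
  set k : Submodule K V → ℕ := fun W => m W * (n + 1) + (n - d W) with hk
  have hSne : (k '' {W : Submodule K V | W ≠ ⊥}).Nonempty :=
    ⟨k ⊤, ⟨⊤, by simp, rfl⟩⟩
  obtain ⟨W₀, hW₀ne, hW₀k⟩ := Nat.sInf_mem hSne
  have hkmin : ∀ W : Submodule K V, W ≠ ⊥ → k W₀ ≤ k W := by
    intro W hW
    rw [hW₀k]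
    exact Nat.sInf_le ⟨W, hW, rfl⟩
  -- W₀ minimizes m
  have hmmin : ∀ W : Submodule K V, W ≠ ⊥ → m W₀ ≤ m W := by
    intro W hW
    by_contra h
    push_neg at h
    have h1 : k W ≤ m W * (n + 1) + n := by
      simp only [hk]
      exact Nat.add_le_add_left (Nat.sub_le _ _) _
    have h2 : m W * (n + 1) + n < m W₀ * (n + 1) := by
      calc m W * (n + 1) + n < m W * (n + 1) + (n + 1) := by omega
        _ = (m W + 1) * (n + 1) := by ring
        _ ≤ m W₀ * (n + 1) := Nat.mul_le_mul_right _ h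
    have := hkmin W hW
    have h3 : m W₀ * (n + 1) ≤ k W₀ := Nat.le_add_right _ _
    omega
  -- invariance
  have hinvariant : ∀ g : G, W₀.map (ρ g : V ≃ₗ[K] V).toLinearMap = W₀ := by
    intro g
    set W' := W₀.map (ρ g : V ≃ₗ[K] V).toLinearMap with hW'
    have hdW' : d W' = d W₀ := LinearEquiv.finrank_map_eq (ρ g) W₀
    have hφW' : φ W' = φ W₀ := hinv g W₀
    have hW'ne : W' ≠ ⊥ := by
      intro hbot
      have h0 := hdpos W₀ hW₀ne
      rw [← hdW', hbot] at h0
      simp [hd] at h0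
    have hmW' : m W' = m W₀ := by simp only [hm, hdW', hφW']
    -- show the sup is also a minimizer
    set S := W₀ ⊔ W' with hS
    set I := W₀ ⊓ W' with hI
    have hSne' : S ≠ ⊥ := by
      intro hbot
      exact hW₀ne (le_bot_iff.mp (hbot ▸ le_sup_left))
    have hdim : d S + d I = d W₀ + d W' := Submodule.finrank_sup_add_finrank_inf_eq W₀ W'
    have hφ : φ S + φ I ≤ φ W₀ + φ W' := hsub W₀ W'
    -- φ W₀ * d I ≤ φ I * d W₀ (trivial if I = ⊥)
    have hIineq : φ W₀ * d I ≤ φ I * d W₀ := by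
      by_cases hIbot : I = ⊥
      · have : d I = 0 := by rw [hIbot]; simp [hd]
        simp [this]
      · exact (key W₀ I hW₀ne hIbot).mp (hmmin I hIbot)
    have hSineq : φ S * d W₀ ≤ φ W₀ * d S := by
      have h1 : φ S * d W₀ + φ I * d W₀ ≤ (φ W₀ + φ W') * d W₀ := by
        rw [← add_mul]; exact Nat.mul_le_mul_right _ hφ
      have h2 : (φ W₀ + φ W') * d W₀ = φ W₀ * (d S + d I) := by
        rw [hdim, hφW', hdW']; ring
      have h3 : φ S * d W₀ + φ I * d W₀ ≤ φ W₀ * d S + φ W₀ * d I := by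
        rw [← mul_add]; omega
      omega
    have hmS : m S = m W₀ := le_antisymm ((key S W₀ hSne' hW₀ne).mpr hSineq) (hmmin S hSne')
    -- dimension comparison via k
    have hkS : k W₀ ≤ k S := hkmin S hSne'
    have hdS : d S ≤ d W₀ := by
      simp only [hk, hmS] at hkS
      have h4 : n - d W₀ ≤ n - d S := by omega
      have := hdle S
      have := hdle W₀
      have := hdpos S hSne'
      have := hdpos W₀ hW₀ne
      omega
    have hSeq : W₀ = S := Submodule.eq_of_le_of_finrank_le le_sup_left hdS
    have hW'le : W' ≤ W₀ := hSeq ▸ le_sup_right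
    exact Submodule.eq_of_le_of_finrank_le hW'le (le_of_eq hdW'.symm)
  refine ⟨W₀, hW₀ne, hinvariant, ?_⟩
  intro W hW
  have hcross := (key W₀ W hW₀ne hW).mp (hmmin W hW)
  have hdW : (0:ℝ) < d W := by exact_mod_cast hdpos W hW
  have hdW₀ : (0:ℝ) < d W₀ := by exact_mod_cast hdpos W₀ hW₀ne
  rw [div_le_div_iff₀ hdW₀ hdW]
  exact_mod_cast hcross
end

section
/- In the submodularity lemma setting, the set of nonzero subspaces achieving the minimum of φ(W)/dim W is closed under subspace sum: if W₁ and W₂ both achieve the minimum value c = min_{W≠0} φ(W)/dim W, then W₁ + W₂ also achieves it. -/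
theorem stmt7 {K V : Type*} [Field K] [AddCommGroup V] [Module K V]
    [FiniteDimensional K V]
    (φ : Submodule K V → ℕ)
    (hmono : ∀ W₁ W₂ : Submodule K V, W₁ ≤ W₂ → φ W₁ ≤ φ W₂)
    (hsub : ∀ W₁ W₂ : Submodule K V, φ (W₁ ⊔ W₂) + φ (W₁ ⊓ W₂) ≤ φ W₁ + φ W₂)
    (hbot : φ ⊥ = 0) (c : ℝ)
    (hmin : ∀ W : Submodule K V, W ≠ ⊥ → c ≤ (φ W : ℝ) / Module.finrank K W)
    (W₁ W₂ : Submodule K V) (h₁0 : W₁ ≠ ⊥) (h₂0 : W₂ ≠ ⊥)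
    (h₁ : (φ W₁ : ℝ) / Module.finrank K W₁ = c)
    (h₂ : (φ W₂ : ℝ) / Module.finrank K W₂ = c) :
    (φ (W₁ ⊔ W₂) : ℝ) / Module.finrank K ↥(W₁ ⊔ W₂) = c := by
  have hd₁ : 0 < Module.finrank K W₁ := Module.finrank_pos_iff.mpr
    (Submodule.nontrivial_iff_ne_bot.mpr h₁0)
  have hd₂ : 0 < Module.finrank K W₂ := Module.finrank_pos_iff.mpr
    (Submodule.nontrivial_iff_ne_bot.mpr h₂0)
  have hsupne : W₁ ⊔ W₂ ≠ ⊥ := fun h => h₁0 (le_bot_iff.mp (h ▸ le_sup_left))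
  have hd : 0 < Module.finrank K ↥(W₁ ⊔ W₂) := Module.finrank_pos_iff.mpr
    (Submodule.nontrivial_iff_ne_bot.mpr hsupne)
  have hd1R : (0:ℝ) < (Module.finrank K W₁ : ℝ) := by exact_mod_cast hd₁
  have hd2R : (0:ℝ) < (Module.finrank K W₂ : ℝ) := by exact_mod_cast hd₂
  have hdR : (0:ℝ) < (Module.finrank K ↥(W₁ ⊔ W₂) : ℝ) := by exact_mod_cast hd
  have e₁ : (φ W₁ : ℝ) = c * Module.finrank K W₁ := by
    field_simp at h₁; linarith [h₁]
  have e₂ : (φ W₂ : ℝ) = c * Module.finrank K W₂ := by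
    field_simp at h₂; linarith [h₂]
  have hdim : Module.finrank K ↥(W₁ ⊔ W₂) + Module.finrank K ↥(W₁ ⊓ W₂)
      = Module.finrank K W₁ + Module.finrank K W₂ :=
    Submodule.finrank_sup_add_finrank_inf_eq W₁ W₂
  have hinf : c * (Module.finrank K ↥(W₁ ⊓ W₂) : ℝ) ≤ (φ (W₁ ⊓ W₂) : ℝ) := by
    rcases eq_or_ne (W₁ ⊓ W₂) ⊥ with h | h
    · rw [h, hbot]
      simp
    · have := hmin _ h
      have hpos : (0:ℝ) < (Module.finrank K ↥(W₁ ⊓ W₂) : ℝ) := by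
        exact_mod_cast Module.finrank_pos_iff.mpr (Submodule.nontrivial_iff_ne_bot.mpr h)
      calc c * (Module.finrank K ↥(W₁ ⊓ W₂) : ℝ)
          ≤ ((φ (W₁ ⊓ W₂) : ℝ) / Module.finrank K ↥(W₁ ⊓ W₂)) * Module.finrank K ↥(W₁ ⊓ W₂) := by
            exact mul_le_mul_of_nonneg_right this hpos.le
        _ = (φ (W₁ ⊓ W₂) : ℝ) := by field_simp
  have hsup : c * (Module.finrank K ↥(W₁ ⊔ W₂) : ℝ) ≤ (φ (W₁ ⊔ W₂) : ℝ) := by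
    have := hmin _ hsupne
    calc c * (Module.finrank K ↥(W₁ ⊔ W₂) : ℝ)
        ≤ ((φ (W₁ ⊔ W₂) : ℝ) / Module.finrank K ↥(W₁ ⊔ W₂)) * Module.finrank K ↥(W₁ ⊔ W₂) :=
          mul_le_mul_of_nonneg_right this hdR.le
      _ = (φ (W₁ ⊔ W₂) : ℝ) := by field_simp
  have hsubR : (φ (W₁ ⊔ W₂) : ℝ) + (φ (W₁ ⊓ W₂) : ℝ) ≤ (φ W₁ : ℝ) + (φ W₂ : ℝ) := by
    exact_mod_cast hsub W₁ W₂
  have hdimR : (Module.finrank K ↥(W₁ ⊔ W₂) : ℝ) + (Module.finrank K ↥(W₁ ⊓ W₂) : ℝ)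
      = (Module.finrank K W₁ : ℝ) + (Module.finrank K W₂ : ℝ) := by exact_mod_cast hdim
  have key : (φ (W₁ ⊔ W₂) : ℝ) = c * Module.finrank K ↥(W₁ ⊔ W₂) := by nlinarith
  rw [key]
  field_simp
end
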